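/- Define h : ℝ × (0,1) → ℝ⁴ by h(θ, t) = (e^{−1/t}·cos θ, e^{−1/t}·sin θ, e^{1/(t−1)}·cos θ, e^{1/(t−1)}·sin θ). Then: (i) h is infinitely differentiable on ℝ × (0,1); (ii) at every point (θ, t) ∈ ℝ × (0,1) the derivative of h is an injective linear map ℝ² → ℝ⁴ (so h is an immersion); and (iii) if h(θ, t) = h(θ', t') with t, t' ∈ (0,1), then t = t' and θ − θ' is an integer multiple of 2π. -/

import Mathlib

open ContinuousLinearMap in
/-- Derivative of a "product" map `p ↦ f p.2 * g p.1`. -/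
lemma surgery_aux {f g : ℝ → ℝ} {f' g' : ℝ} {θ t : ℝ} (hf : HasDerivAt f f' t)
    (hg : HasDerivAt g g' θ) :
    HasFDerivAt (fun p : ℝ × ℝ => f p.2 * g p.1)
      (f t • (g' • fst ℝ ℝ ℝ) + g θ • (f' • snd ℝ ℝ ℝ)) (θ, t) :=
  (hf.comp_hasFDerivAt (θ, t) hasFDerivAt_snd).mul
    (hg.comp_hasFDerivAt (θ, t) hasFDerivAt_fst)

lemma surgery_deriv_a {t : ℝ} (ht : t ≠ 0) :
    HasDerivAt (fun s : ℝ => Real.exp (-1 / s)) (Real.exp (-1 / t) * (1 / t ^ 2)) t := by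
  have h1 : HasDerivAt (fun s : ℝ => -1 / s) (1 / t ^ 2) t := by
    have := (hasDerivAt_const t (-1 : ℝ)).div (hasDerivAt_id t) ht
    simp only [id_eq] at this
    refine this.congr_deriv ?_
    ring
  exact h1.exp

lemma surgery_deriv_b {t : ℝ} (ht : t - 1 ≠ 0) :
    HasDerivAt (fun s : ℝ => Real.exp (1 / (s - 1)))
      (Real.exp (1 / (t - 1)) * (-1 / (t - 1) ^ 2)) t := by
  have h1 : HasDerivAt (fun s : ℝ => 1 / (s - 1)) (-1 / (t - 1) ^ 2) t := by
    have := (hasDerivAt_const t (1 : ℝ)).div ((hasDerivAt_id t).sub_const 1) ht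
    simp only [id_eq] at this
    refine this.congr_deriv ?_
    ring
  exact h1.exp

/-- **The explicit surgery annulus.**
The map `h(θ,t) = (e^{−1/t}cos θ, e^{−1/t}sin θ, e^{1/(t−1)}cos θ, e^{1/(t−1)}sin θ)`
is smooth on `ℝ × (0,1)`, is an immersion there, and is injective up to the
`2π`-periodicity in `θ`. -/
theorem surgery_annulus :
    let h : ℝ × ℝ → Fin 4 → ℝ := fun p =>
      ![Real.exp (-1 / p.2) * Real.cos p.1,
        Real.exp (-1 / p.2) * Real.sin p.1,
        Real.exp (1 / (p.2 - 1)) * Real.cos p.1,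
        Real.exp (1 / (p.2 - 1)) * Real.sin p.1]
    ContDiffOn ℝ (⊤ : ℕ∞) h (Set.univ ×ˢ Set.Ioo (0 : ℝ) 1) ∧
      (∀ θ t : ℝ, t ∈ Set.Ioo (0 : ℝ) 1 →
        Function.Injective (fderiv ℝ h (θ, t))) ∧
      (∀ θ t θ' t' : ℝ, t ∈ Set.Ioo (0 : ℝ) 1 → t' ∈ Set.Ioo (0 : ℝ) 1 →
        h (θ, t) = h (θ', t') → t = t' ∧ ∃ k : ℤ, θ - θ' = k * (2 * Real.pi)) := by
  intro h
  set s : Set (ℝ × ℝ) := Set.univ ×ˢ Set.Ioo (0 : ℝ) 1 with hs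
  refine ⟨?_, ?_, ?_⟩
  · -- smoothness
    have h0 : ∀ p ∈ s, p.2 ≠ 0 := fun p hp => ne_of_gt hp.2.1
    have h1 : ∀ p ∈ s, p.2 - 1 ≠ 0 := fun p hp => sub_ne_zero.mpr (ne_of_lt hp.2.2)
    have ha : ContDiffOn ℝ (⊤ : ℕ∞) (fun p : ℝ × ℝ => Real.exp (-1 / p.2)) s :=
      Real.contDiff_exp.comp_contDiffOn (contDiffOn_const.div contDiff_snd.contDiffOn h0)
    have hb : ContDiffOn ℝ (⊤ : ℕ∞) (fun p : ℝ × ℝ => Real.exp (1 / (p.2 - 1))) s :=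
      Real.contDiff_exp.comp_contDiffOn
        (contDiffOn_const.div (contDiff_snd.sub contDiff_const).contDiffOn h1)
    have hcos : ContDiffOn ℝ (⊤ : ℕ∞) (fun p : ℝ × ℝ => Real.cos p.1) s :=
      (Real.contDiff_cos.comp contDiff_fst).contDiffOn
    have hsin : ContDiffOn ℝ (⊤ : ℕ∞) (fun p : ℝ × ℝ => Real.sin p.1) s :=
      (Real.contDiff_sin.comp contDiff_fst).contDiffOn
    rw [contDiffOn_pi]
    intro i
    fin_cases i
    · exact ha.mul hcos
    · exact ha.mul hsin
    · exact hb.mul hcos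
    · exact hb.mul hsin
  · -- immersion
    intro θ t ht
    have ht0 : t ≠ 0 := ne_of_gt ht.1
    have ht1 : t - 1 ≠ 0 := sub_ne_zero.mpr (ne_of_lt ht.2)
    set a : ℝ := Real.exp (-1 / t) with ha
    set b : ℝ := Real.exp (1 / (t - 1)) with hb
    set da : ℝ := a * (1 / t ^ 2) with hda
    set db : ℝ := b * (-1 / (t - 1) ^ 2) with hdb
    set L0 : ℝ × ℝ →L[ℝ] ℝ :=
      a • ((-Real.sin θ) • ContinuousLinearMap.fst ℝ ℝ ℝ) +
        Real.cos θ • (da • ContinuousLinearMap.snd ℝ ℝ ℝ) with hL0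
    set L1 : ℝ × ℝ →L[ℝ] ℝ :=
      a • (Real.cos θ • ContinuousLinearMap.fst ℝ ℝ ℝ) +
        Real.sin θ • (da • ContinuousLinearMap.snd ℝ ℝ ℝ) with hL1
    set L2 : ℝ × ℝ →L[ℝ] ℝ :=
      b • ((-Real.sin θ) • ContinuousLinearMap.fst ℝ ℝ ℝ) +
        Real.cos θ • (db • ContinuousLinearMap.snd ℝ ℝ ℝ) with hL2
    set L3 : ℝ × ℝ →L[ℝ] ℝ :=
      b • (Real.cos θ • ContinuousLinearMap.fst ℝ ℝ ℝ) +
        Real.sin θ • (db • ContinuousLinearMap.snd ℝ ℝ ℝ) with hL3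
    have hF : HasFDerivAt h (ContinuousLinearMap.pi ![L0, L1, L2, L3]) (θ, t) := by
      apply hasFDerivAt_pi''
      intro i
      fin_cases i <;>
        simp only [ContinuousLinearMap.proj_pi, Matrix.cons_val_zero, Matrix.cons_val_one,
          Matrix.head_cons, Matrix.cons_val_two, Matrix.cons_val_three, Matrix.tail_cons, h,
          Fin.isValue]
      · exact surgery_aux (surgery_deriv_a ht0) (Real.hasDerivAt_cos θ)
      · exact surgery_aux (surgery_deriv_a ht0) (Real.hasDerivAt_sin θ)
      · exact surgery_aux (surgery_deriv_b ht1) (Real.hasDerivAt_cos θ)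
      · exact surgery_aux (surgery_deriv_b ht1) (Real.hasDerivAt_sin θ)
    rw [hF.fderiv]
    intro v w hvw
    have hsub : ContinuousLinearMap.pi ![L0, L1, L2, L3] (v - w) = 0 := by
      rw [map_sub, hvw, sub_self]
    have h0 : L0 (v - w) = 0 := by
      have := congrFun hsub 0
      simpa [ContinuousLinearMap.pi_apply] using this
    have h1 : L1 (v - w) = 0 := by
      have := congrFun hsub 1
      simpa [ContinuousLinearMap.pi_apply] using this
    have h0' : a * (-Real.sin θ * (v - w).1) + Real.cos θ * (da * (v - w).2) = 0 := by
      simpa [hL0, ContinuousLinearMap.add_apply, ContinuousLinearMap.smul_apply,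
        smul_eq_mul] using h0
    have h1' : a * (Real.cos θ * (v - w).1) + Real.sin θ * (da * (v - w).2) = 0 := by
      simpa [hL1, ContinuousLinearMap.add_apply, ContinuousLinearMap.smul_apply,
        smul_eq_mul] using h1
    have hpyth := Real.sin_sq_add_cos_sq θ
    have hapos : 0 < a := Real.exp_pos _
    have hdapos : 0 < da := by
      apply mul_pos hapos
      positivity
    have hv2 : (v - w).2 = 0 := by
      have hkey : da * (v - w).2 = 0 := by
        linear_combination Real.cos θ * h0' + Real.sin θ * h1' - da * (v - w).2 * hpyth
      exact (mul_eq_zero.mp hkey).resolve_left (ne_of_gt hdapos)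
    have hv1 : (v - w).1 = 0 := by
      have hkey : a * (v - w).1 = 0 := by
        linear_combination (-Real.sin θ) * h0' + Real.cos θ * h1' - a * (v - w).1 * hpyth
      exact (mul_eq_zero.mp hkey).resolve_left (ne_of_gt hapos)
    have : v - w = 0 := Prod.ext hv1 hv2
    exact sub_eq_zero.mp this
  · -- injectivity mod 2π
    intro θ t θ' t' ht ht' hh
    have ht0 : t ≠ 0 := ne_of_gt ht.1
    have ht0' : t' ≠ 0 := ne_of_gt ht'.1
    have e0 : Real.exp (-1 / t) * Real.cos θ = Real.exp (-1 / t') * Real.cos θ' := by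
      have := congrFun hh 0
      simpa [h] using this
    have e1 : Real.exp (-1 / t) * Real.sin θ = Real.exp (-1 / t') * Real.sin θ' := by
      have := congrFun hh 1
      simpa [h] using this
    have hpθ := Real.sin_sq_add_cos_sq θ
    have hpθ' := Real.sin_sq_add_cos_sq θ'
    set a : ℝ := Real.exp (-1 / t) with ha
    set a' : ℝ := Real.exp (-1 / t') with ha'
    have hsq : a ^ 2 = a' ^ 2 := by
      have h2 : (a * Real.cos θ) ^ 2 + (a * Real.sin θ) ^ 2 =
          (a' * Real.cos θ') ^ 2 + (a' * Real.sin θ') ^ 2 := by rw [e0, e1]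
      linear_combination h2 - a ^ 2 * hpθ + a' ^ 2 * hpθ'
    have hapos : 0 < a := Real.exp_pos _
    have hapos' : 0 < a' := Real.exp_pos _
    have haa : a = a' := by nlinarith
    have htt : t = t' := by
      have h3 : -1 / t = -1 / t' := Real.exp_injective haa
      field_simp at h3
      linarith
    rw [← haa] at e0 e1
    have hcos : Real.cos θ = Real.cos θ' := mul_left_cancel₀ (ne_of_gt hapos) e0
    have hsin : Real.sin θ = Real.sin θ' := mul_left_cancel₀ (ne_of_gt hapos) e1
    have hang : (θ : Real.Angle) = (θ' : Real.Angle) := Real.Angle.cos_sin_inj hcos hsin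
    obtain ⟨k, hk⟩ := Real.Angle.angle_eq_iff_two_pi_dvd_sub.mp hang
    exact ⟨htt, k, by rw [hk]; ring⟩
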